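/- arXiv:1905.10738 — 3 statements merged into one kernel-verified Lean document; each statement's English description precedes it below -/
import Mathlib

section
/- Let à be a symmetric doubly stochastic N×N matrix whose eigenvalue 1 is simple with normalized eigenvector (1/√N)·1, and let r ∈ ℝ with 2r·μ < 1 for every eigenvalue μ ≠ 1 of à and 2r·1 = 1 (i.e., r = 1/2). Then lim_{t→∞} (1/log t) ∫₀^{log t} e^{−(I − 2rÃ)u} du = (1/N) J, where J is the all-ones N×N matrix. -/
attribute [local instance] Matrix.frobeniusNormedAddCommGroup Matrix.frobeniusNormedSpace

open NormedSpace Matrix Filter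

/-!
For `r = 1/2` the exponent is `B = 1 - Ã`, which is positive semidefinite. In the functional
calculus of `B`, the Cesàro mean `T⁻¹ ∫₀ᵀ exp (-u B) du` is `f_T(B)` with
`f_T(x) = T⁻¹ ∫₀ᵀ exp (-u x) du`, and `f_T` tends to the indicator of `{0}` on the (finite)
spectrum of `B`. So the limit is the spectral projection `P` of `B` at `0`. It is symmetric,
`B P = 0` puts every column of `P` in `ker B`, i.e. makes it constant, and `P 1 = 1` because
`1 ∈ ker B`; this forces `P = J / N`.
-/

open MeasureTheory Set Topology

theorem Set.Finite.tendstoUniformlyOn {α β ι : Type*} [UniformSpace β] {F : ι → α → β}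
    {f : α → β} {l : Filter ι} {s : Set α} (hs : s.Finite)
    (h : ∀ x ∈ s, Tendsto (F · x) l (𝓝 (f x))) : TendstoUniformlyOn F f l s :=
  fun _ hu => hs.eventually_all.2 fun x hx => Uniform.tendsto_nhds_right.1 (h x hx) hu

theorem Real.tendsto_inv_mul_integral_Ioc_exp_neg_mul {c : ℝ} (hc : 0 ≤ c) :
    Tendsto (fun T => T⁻¹ * ∫ u in Ioc 0 T, Real.exp (-u * c)) atTop
      (𝓝 (({0} : Set ℝ).indicator 1 c)) := by
  rcases hc.eq_or_lt with rfl | hc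
  · refine tendsto_const_nhds.congr' ?_
    filter_upwards [eventually_gt_atTop 0] with T hT
    simp [hT.le, hT.ne']
  · set M := ∫ u in Ioi 0, Real.exp (-u * c)
    have hint : IntegrableOn (fun u => Real.exp (-u * c)) (Ioi 0) := by
      simpa [mul_comm] using exp_neg_integrableOn_Ioi 0 hc
    rw [indicator_of_notMem (by simpa using hc.ne')]
    refine tendsto_of_tendsto_of_tendsto_of_le_of_le' tendsto_const_nhds
      (by simpa using tendsto_inv_atTop_zero.mul_const M) ?_ ?_ <;>
      filter_upwards [eventually_gt_atTop 0] with T hT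
    · exact mul_nonneg (inv_nonneg.2 hT.le)
        (setIntegral_nonneg measurableSet_Ioc fun _ _ => (Real.exp_pos _).le)
    · exact mul_le_mul_of_nonneg_left (setIntegral_mono_set hint
        (.of_forall fun _ => (Real.exp_pos _).le) (.of_forall Ioc_subset_Ioi_self))
        (inv_nonneg.2 hT.le)

namespace Matrix

variable {n : Type*} [Fintype n] [DecidableEq n] {B : Matrix n n ℝ}

theorem continuousOn_real_spectrum (B : Matrix n n ℝ) (f : ℝ → ℝ) :
    ContinuousOn f (spectrum ℝ B) :=
  B.finite_real_spectrum.continuousOn f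

theorem IsHermitian.posSemidef_of_forall_eigenvalue_nonneg (hB : B.IsHermitian)
    (h : ∀ (μ : ℝ) (v : n → ℝ), v ≠ 0 → B *ᵥ v = μ • v → 0 ≤ μ) : B.PosSemidef :=
  hB.posSemidef_iff_eigenvalues_nonneg.2 fun i =>
    h _ _ ((WithLp.ofLp_eq_zero 2).ne.2 <| hB.eigenvectorBasis.orthonormal.ne_zero i)
      (hB.mulVec_eigenvectorBasis i)

theorem IsHermitian.exp_smul_eq_cfc (hB : B.IsHermitian) (t : ℝ) :
    NormedSpace.exp (t • B) = cfc (fun x => Real.exp (t * x)) B := by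
  conv_lhs => rw [hB.spectral_theorem]
  simp only [hB.cfc_eq, IsHermitian.cfc, RCLike.ofReal_real_eq_id, Function.id_comp,
    Unitary.conjStarAlgAut_apply]
  have := exp_units_conj (Unitary.toUnits hB.eigenvectorUnitary) (t • diagonal hB.eigenvalues)
  simp only [Unitary.val_toUnits_apply, Unitary.val_inv_toUnits_apply, UnitaryGroup.inv_val,
    mul_smul_comm, smul_mul_assoc] at this
  rw [this, ← diagonal_smul, exp_diagonal]
  simp [Pi.exp_def, Real.exp_eq_exp_ℝ, Function.comp_def]

theorem IsHermitian.integral_cfc {X : Type*} [MeasurableSpace X] {μ : Measure X}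
    (hB : B.IsHermitian) {F : X → ℝ → ℝ} (hF : ∀ i, Integrable (F · (hB.eigenvalues i)) μ) :
    ∫ u, cfc (F u) B ∂μ = cfc (fun x => ∫ u, F u x ∂μ) B := by
  let Φ : (n → ℝ) →L[ℝ] Matrix n n ℝ := LinearMap.toContinuousLinearMap
    ((Unitary.conjStarAlgAut ℝ _ hB.eigenvectorUnitary).toAlgEquiv.toLinearMap ∘ₗ
      diagonalLinearMap n ℝ ℝ)
  have hΦ : ∀ f, cfc f B = Φ (f ∘ hB.eigenvalues) := fun f => by
    simp [Φ, hB.cfc_eq, IsHermitian.cfc]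
  simp_rw [hΦ]
  exact (Φ.integral_comp_comm (Integrable.of_eval hF)).trans
    (congrArg Φ (funext (eval_integral hF)))

theorem PosSemidef.tendsto_inv_smul_integral_Ioc_exp_neg_smul (hB : B.PosSemidef) :
    Tendsto (fun T : ℝ => T⁻¹ • ∫ u in Ioc 0 T, exp (-u • B)) atTop
      (𝓝 (cfc (({0} : Set ℝ).indicator 1) B)) := by
  have hmean : ∀ T : ℝ, T⁻¹ • ∫ u in Ioc 0 T, exp (-u • B) =
      cfc (fun x => T⁻¹ * ∫ u in Ioc 0 T, Real.exp (-u * x)) B := fun T => by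
    simp_rw [hB.isHermitian.exp_smul_eq_cfc]
    rw [hB.isHermitian.integral_cfc fun i => (by fun_prop : Continuous _).integrableOn_Ioc,
      cfc_const_mul _ _ _ (continuousOn_real_spectrum B _)]
  simp_rw [hmean]
  refine tendsto_cfc_fun (B.finite_real_spectrum.tendstoUniformlyOn fun x hx => ?_)
    (.of_forall fun _ => continuousOn_real_spectrum B _)
  exact Real.tendsto_inv_mul_integral_Ioc_exp_neg_mul
    ((posSemidef_iff_isHermitian_and_spectrum_nonneg.1 hB).2 hx)

theorem mul_cfc_indicator_zero (hB : B.IsHermitian) :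
    B * cfc (({0} : Set ℝ).indicator 1) B = 0 := calc
  B * cfc (({0} : Set ℝ).indicator 1) B
      = cfc (fun x => x * ({0} : Set ℝ).indicator 1 x) B := by
    rw [cfc_mul _ _ B (continuousOn_real_spectrum B _) (continuousOn_real_spectrum B _),
      cfc_id' ℝ B hB.isSelfAdjoint]
  _ = cfc (0 : ℝ → ℝ) B := cfc_congr fun x _ => by by_cases hx : x = 0 <;> simp [hx]
  _ = 0 := cfc_zero ℝ B

theorem cfc_indicator_zero_mulVec_of_mulVec_eq_zero (hB : B.IsHermitian) {v : n → ℝ}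
    (hv : B *ᵥ v = 0) : cfc (({0} : Set ℝ).indicator 1) B *ᵥ v = v := by
  -- `1 - x⁻¹ * x` is the indicator of `{0}` because `0⁻¹ = 0`.
  have : cfc (({0} : Set ℝ).indicator 1) B = 1 - cfc (fun x : ℝ => x⁻¹) B * B := calc
    cfc (({0} : Set ℝ).indicator 1) B = cfc (fun x => 1 - x⁻¹ * x) B :=
      cfc_congr fun x _ => by by_cases hx : x = 0 <;> simp [hx]
    _ = 1 - cfc (fun x : ℝ => x⁻¹) B * B := by
      rw [cfc_sub _ _ B (continuousOn_real_spectrum B _) (continuousOn_real_spectrum B _),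
        cfc_mul _ _ B (continuousOn_real_spectrum B _) (continuousOn_real_spectrum B _),
        cfc_const_one ℝ B hB.isSelfAdjoint, cfc_id' ℝ B hB.isSelfAdjoint]
  rw [this, sub_mulVec, one_mulVec, ← mulVec_mulVec, hv, mulVec_zero, sub_zero]

theorem eq_inv_card_smul_of_mul_eq_zero {P : Matrix n n ℝ} (hP : IsSelfAdjoint P)
    (hBP : B * P = 0) (hker : ∀ v, B *ᵥ v = 0 → ∃ c : ℝ, v = fun _ => c)
    (hfix : P *ᵥ (fun _ => 1) = fun _ => 1) :
    P = (Fintype.card n : ℝ)⁻¹ • of fun _ _ => 1 := by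
  ext i j
  obtain ⟨c, hc⟩ := hker (P *ᵥ Pi.single i 1) (by rw [mulVec_mulVec, hBP, zero_mulVec])
  have hrow : ∀ k, P i k = c := fun k => by
    simpa [← hP.isHermitian.apply i k] using congrFun hc k
  have hsum : (Fintype.card n : ℝ) * c = 1 := by
    simpa [mulVec, dotProduct, hrow] using congrFun hfix i
  simpa [hrow] using eq_inv_of_mul_eq_one_right hsum

end Matrix

theorem stmt_7_general (N : ℕ) (A : Matrix (Fin N) (Fin N) ℝ)
    (hsym : A.IsSymm)
    (hrow : ∀ i, ∑ j, A i j = 1)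
    (htop : ∀ v : Fin N → ℝ, A.mulVec v = v → ∃ c : ℝ, v = fun _ => c)
    (heig : ∀ (μ : ℝ) (v : Fin N → ℝ), v ≠ 0 → A.mulVec v = μ • v → μ = 1 ∨ μ < 1)
    (r : ℝ) (hr : r = 1 / 2) :
    Tendsto
      (fun t : ℝ => (Real.log t)⁻¹ •
        ∫ u in Set.Ioc (0:ℝ) (Real.log t), exp (-u • ((1 : Matrix (Fin N) (Fin N) ℝ) - (2 * r) • A)))
      atTop
      (nhds ((N : ℝ)⁻¹ • Matrix.of (fun _ _ : Fin N => (1:ℝ)))) := by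
  have hB : (1 - A).IsHermitian := isHermitian_one.sub hsym
  have hpsd : (1 - A).PosSemidef := hB.posSemidef_of_forall_eigenvalue_nonneg fun μ v hv hμ => by
    rcases heig (1 - μ) v hv (by rw [sub_smul, one_smul, ← hμ, sub_mulVec, one_mulVec,
      sub_sub_cancel]) with h | h <;> linarith
  have hker : ∀ v, (1 - A) *ᵥ v = 0 → ∃ c : ℝ, v = fun _ => c := fun v hv =>
    htop v (by rwa [sub_mulVec, one_mulVec, sub_eq_zero, eq_comm] at hv)
  have hones : (1 - A) *ᵥ (fun _ => 1) = 0 := by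
    rw [sub_mulVec, one_mulVec, sub_eq_zero]
    ext i
    simp [mulVec, dotProduct, hrow]
  have hP := eq_inv_card_smul_of_mul_eq_zero (cfc_predicate _ (1 - A))
    (mul_cfc_indicator_zero hB) hker (cfc_indicator_zero_mulVec_of_mulVec_eq_zero hB hones)
  rw [Fintype.card_fin] at hP
  rw [hr, ← hP]
  simpa [Function.comp_def] using
    hpsd.tendsto_inv_smul_integral_Ioc_exp_neg_smul.comp Real.tendsto_log_atTop

theorem stmt_7 (N : ℕ) (hN : 0 < N) (A : Matrix (Fin N) (Fin N) ℝ)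
    (hnonneg : ∀ i j, 0 ≤ A i j)
    (hsym : A.IsSymm)
    (hrow : ∀ i, ∑ j, A i j = 1)
    (htop : ∀ v : Fin N → ℝ, A.mulVec v = v → ∃ c : ℝ, v = fun _ => c)
    (heig : ∀ (μ : ℝ) (v : Fin N → ℝ), v ≠ 0 → A.mulVec v = μ • v → μ = 1 ∨ μ < 1)
    (r : ℝ) (hr : r = 1 / 2) :
    Tendsto
      (fun t : ℝ => (Real.log t)⁻¹ •
        ∫ u in Set.Ioc (0:ℝ) (Real.log t), exp (-u • ((1 : Matrix (Fin N) (Fin N) ℝ) - (2 * r) • A)))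
      atTop
      (nhds ((N : ℝ)⁻¹ • Matrix.of (fun _ _ : Fin N => (1:ℝ)))) :=
  stmt_7_general N A hsym hrow htop heig r hr
end

section
/- Let à be a symmetric doubly stochastic N×N matrix with eigenvalues 1 = λ₀ > Re(λ₁) ≥ … (eigenvalue 1 simple, others with real part < 1), N⁰, d > 0, and set U_k = I + (d/(N⁰ + d(k+1)))(Ã − I). Then the sequence of vectors E[Ψ^t] − E[Φ^t] = Z⁰(Ã − I)∏_{j=1}^{t} U_j has norm of order O(t^{Re(λ₁)−1}), where λ₁ is the second largest eigenvalue of Ã; in particular it tends to 0 as t → ∞. -/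
/-!
Since `Ã` is symmetric, `Z⁰` expands in an orthonormal eigenbasis `vᵢ` of `Ã`, and each
`vᵢ` is a left eigenvector of `(Ã - I) ∏ U_j`, with eigenvalue
`(λᵢ - 1) ∏_{j=1}^t (1 + d (λᵢ - 1) / (N⁰ + d j))`. This vanishes for `λᵢ = 1`; otherwise
`-1 ≤ λᵢ ≤ λ₁` (Gershgorin), and `1 - x ≤ e^{-x}` with `log (1 + d / a) ≤ d / a`
gives `|1 - s d / a| ≤ (a / (a + d)) ^ s` for `s = 1 - λᵢ`. These factors telescope to
`((N⁰ + 2d) / (N⁰ + d (t + 1))) ^ s = O(t ^ (λ₁ - 1))`.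
-/

open Filter Matrix Finset

theorem Matrix.neg_one_le_of_mulVec_eq_smul {n : Type*} [Fintype n] [DecidableEq n]
    {A : Matrix n n ℝ} (hnonneg : ∀ i j, 0 ≤ A i j) (hrow : ∀ i, ∑ j, A i j = 1)
    {μ : ℝ} {v : n → ℝ} (hv : v ≠ 0) (hAv : A *ᵥ v = μ • v) : -1 ≤ μ := by
  have hμ : Module.End.HasEigenvalue (toLin' A) μ :=
    Module.End.hasEigenvalue_of_hasEigenvector
      ⟨by rwa [Module.End.mem_eigenspace_iff, toLin'_apply], hv⟩
  obtain ⟨k, hk⟩ := eigenvalue_mem_ball hμ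
  have hradius : ∑ j ∈ univ.erase k, ‖A k j‖ = 1 - A k k := by
    simp only [Real.norm_of_nonneg (hnonneg k _)]
    rw [← hrow k, ← add_sum_erase _ _ (mem_univ k), add_sub_cancel_left]
  rw [Metric.mem_closedBall, hradius, Real.dist_eq] at hk
  linarith [(abs_le.mp hk).1, hnonneg k k]

namespace Matrix.IsHermitian

variable {n : Type*} [Fintype n] [DecidableEq n] {A : Matrix n n ℝ} (hA : A.IsHermitian)

theorem vecMul_eigenvectorBasis (i : n) :
    ⇑(hA.eigenvectorBasis i) ᵥ* A = hA.eigenvalues i • ⇑(hA.eigenvectorBasis i) := by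
  rw [← mulVec_transpose, ← conjTranspose_eq_transpose_of_trivial, hA.eq,
    hA.mulVec_eigenvectorBasis]

theorem eigenvectorBasis_ne_zero (i : n) : ⇑(hA.eigenvectorBasis i) ≠ 0 := by
  rw [Ne, WithLp.ofLp_eq_zero]
  exact hA.eigenvectorBasis.orthonormal.ne_zero i

theorem norm_eigenvectorBasis_le_one (i : n) : ‖⇑(hA.eigenvectorBasis i)‖ ≤ 1 := by
  rw [pi_norm_le_iff_of_nonneg zero_le_one]
  intro j
  rw [← hA.eigenvectorBasis.orthonormal.1 i]
  exact PiLp.norm_apply_le _ j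

theorem sum_repr_smul_eigenvectorBasis (x : n → ℝ) :
    ∑ i, hA.eigenvectorBasis.repr (WithLp.toLp 2 x) i • ⇑(hA.eigenvectorBasis i) = x := by
  simpa only [WithLp.ofLp_sum, WithLp.ofLp_smul] using
    congrArg WithLp.ofLp (hA.eigenvectorBasis.sum_repr (WithLp.toLp 2 x))

theorem norm_vecMul_le_of_vecMul_eigenvectorBasis (x : n → ℝ) {M : Matrix n n ℝ} {m : n → ℝ}
    (hM : ∀ i, ⇑(hA.eigenvectorBasis i) ᵥ* M = m i • ⇑(hA.eigenvectorBasis i))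
    {B : ℝ} (hB : ∀ i, |m i| ≤ B) :
    ‖x ᵥ* M‖ ≤ (∑ i, |hA.eigenvectorBasis.repr (WithLp.toLp 2 x) i|) * B := by
  conv_lhs => rw [← hA.sum_repr_smul_eigenvectorBasis x]
  rw [sum_vecMul, sum_mul]
  refine (norm_sum_le _ _).trans (sum_le_sum fun i _ => ?_)
  rw [smul_vecMul, hM, smul_smul, norm_smul, Real.norm_eq_abs, abs_mul, mul_assoc]
  refine mul_le_mul_of_nonneg_left ?_ (abs_nonneg _)
  calc |m i| * ‖⇑(hA.eigenvectorBasis i)‖ ≤ B * 1 :=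
        mul_le_mul (hB i) (hA.norm_eigenvectorBasis_le_one i) (norm_nonneg _)
          ((abs_nonneg _).trans (hB i))
    _ = B := mul_one B

end Matrix.IsHermitian

theorem abs_one_sub_mul_div_le_rpow {a d s : ℝ} (ha : 0 < a) (hd : 0 < d) (hs : 0 ≤ s)
    (hsd : s * d ≤ a) : |1 - s * (d / a)| ≤ (a / (a + d)) ^ s := by
  have hsx : s * (d / a) ≤ 1 := by rwa [← mul_div_assoc, div_le_one ha]
  have hlog : -(d / a) ≤ Real.log (a / (a + d)) := by
    have h := Real.one_sub_inv_le_log_of_pos (div_pos ha (by linarith : 0 < a + d))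
    rwa [inv_div, add_div, div_self ha.ne', sub_add_cancel_left] at h
  rw [abs_of_nonneg (by linarith), Real.rpow_def_of_pos (div_pos ha (by linarith))]
  calc 1 - s * (d / a) ≤ Real.exp (-(s * (d / a))) := by
        linarith [Real.add_one_le_exp (-(s * (d / a)))]
    _ ≤ Real.exp (Real.log (a / (a + d)) * s) := by
        rw [Real.exp_le_exp]; nlinarith

/-- The entry of the paper's diagonal matrix `M^t` at the eigenvalue `lam`. -/
noncomputable def eigenFactor (N0 d lam : ℝ) (t : ℕ) : ℝ :=
  (lam - 1) * ∏ j ∈ range t, (1 + d / (N0 + d * ↑(j + 1)) * (lam - 1))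

theorem prod_abs_le_rpow {N0 d lam : ℝ} (hN0 : 0 < N0) (hd : 0 < d) (hlam : -1 ≤ lam)
    (hlam' : lam ≤ 1) {t : ℕ} (ht : 1 ≤ t) :
    ∏ j ∈ range t, |1 + d / (N0 + d * ↑(j + 1)) * (lam - 1)| ≤
      ((N0 + 2 * d) / (N0 + d * ↑(t + 1))) ^ (1 - lam) := by
  induction t, ht using Nat.le_induction with
  | base =>
    have hratio : (N0 + 2 * d) / (N0 + d * 2) = 1 := by
      rw [div_eq_one_iff_eq (by positivity)]; ring
    have hstep : d / (N0 + d) ≤ 1 := by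
      rw [div_le_one (by positivity)]; linarith
    have hstep' : 0 < d / (N0 + d) := by positivity
    norm_num only [prod_range_one, Nat.cast_one, mul_one, hratio, Real.one_rpow]
    rw [abs_le]
    constructor <;> nlinarith
  | succ t ht ih =>
    have hat : (0 : ℝ) < N0 + d * ↑(t + 1) := by positivity
    have hfactor : |1 + d / (N0 + d * ↑(t + 1)) * (lam - 1)| ≤
        ((N0 + d * ↑(t + 1)) / (N0 + d * ↑(t + 1) + d)) ^ (1 - lam) := by
      have h := abs_one_sub_mul_div_le_rpow hat hd (by linarith : 0 ≤ 1 - lam)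
        (by push_cast; nlinarith [(Nat.one_le_cast (α := ℝ)).mpr ht])
      rwa [show 1 - (1 - lam) * (d / (N0 + d * ↑(t + 1))) =
        1 + d / (N0 + d * ↑(t + 1)) * (lam - 1) by ring] at h
    rw [prod_range_succ]
    calc _ ≤ ((N0 + 2 * d) / (N0 + d * ↑(t + 1))) ^ (1 - lam) *
          ((N0 + d * ↑(t + 1)) / (N0 + d * ↑(t + 1) + d)) ^ (1 - lam) :=
          mul_le_mul ih hfactor (abs_nonneg _) (by positivity)
      _ = _ := by
          rw [← Real.mul_rpow (by positivity) (by positivity)]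
          congr 1
          field_simp
          push_cast; ring

theorem abs_eigenFactor_le {N0 d lam lam₁ : ℝ} (hN0 : 0 < N0) (hd : 0 < d) (hlam : -1 ≤ lam)
    (hlam' : lam = 1 ∨ lam ≤ lam₁) (hlam₁ : lam₁ < 1) {t : ℕ} (ht : 1 ≤ t) :
    |eigenFactor N0 d lam t| ≤ 2 * ((N0 + 2 * d) / d) ^ (1 - lam₁) * (t : ℝ) ^ (lam₁ - 1) := by
  rcases hlam' with rfl | hle
  · simp only [eigenFactor, sub_self, zero_mul, abs_zero]
    positivity
  have ht' : (1 : ℝ) ≤ t := Nat.one_le_cast.mpr ht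
  set r := (N0 + 2 * d) / (N0 + d * ↑(t + 1))
  have hr0 : 0 < r := by positivity
  have hr1 : r ≤ 1 := by
    rw [div_le_one (by positivity)]; push_cast; nlinarith
  have hrt : r ≤ (N0 + 2 * d) / d * (t : ℝ)⁻¹ := by
    rw [← div_eq_mul_inv, div_div, div_le_div_iff_of_pos_left (by positivity) (by positivity)
      (by positivity)]
    push_cast; nlinarith
  calc |eigenFactor N0 d lam t|
      = |lam - 1| * ∏ j ∈ range t, |1 + d / (N0 + d * ↑(j + 1)) * (lam - 1)| := by
        rw [eigenFactor, abs_mul, abs_prod]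
    _ ≤ 2 * r ^ (1 - lam) :=
        mul_le_mul (by rw [abs_le]; constructor <;> linarith)
          (prod_abs_le_rpow hN0 hd hlam (by linarith) ht) (prod_nonneg fun _ _ => abs_nonneg _)
          zero_le_two
    _ ≤ 2 * r ^ (1 - lam₁) :=
        mul_le_mul_of_nonneg_left (Real.rpow_le_rpow_of_exponent_ge hr0 hr1 (by linarith))
          zero_le_two
    _ ≤ 2 * ((N0 + 2 * d) / d * (t : ℝ)⁻¹) ^ (1 - lam₁) := by
        gcongr
    _ = 2 * ((N0 + 2 * d) / d) ^ (1 - lam₁) * (t : ℝ) ^ (lam₁ - 1) := by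
        rw [Real.mul_rpow (by positivity) (by positivity), Real.inv_rpow (by positivity),
          ← Real.rpow_neg (by positivity), neg_sub, mul_assoc]

theorem vecMul_sub_one_mul_prod {n : Type*} [Fintype n] [DecidableEq n] {A : Matrix n n ℝ}
    {N0 d : ℝ} {U : ℕ → Matrix n n ℝ} (hU : ∀ j, U j = 1 + (d / (N0 + d * j)) • (A - 1))
    {v : n → ℝ} {lam : ℝ} (hv : v ᵥ* A = lam • v) (t : ℕ) :
    v ᵥ* ((A - 1) * ((List.range t).map fun j => U (j + 1)).prod) =
      eigenFactor N0 d lam t • v := by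
  have hA1 : v ᵥ* (A - 1) = (lam - 1) • v := by
    rw [vecMul_sub, vecMul_one, hv, sub_smul, one_smul]
  have hprod : ∀ t, v ᵥ* ((List.range t).map fun j => U (j + 1)).prod =
      (∏ j ∈ range t, (1 + d / (N0 + d * ↑(j + 1)) * (lam - 1))) • v := by
    intro t
    induction t with
    | zero => simp
    | succ t ih =>
      rw [List.range_succ, List.map_append, List.prod_append, List.map_singleton,
        List.prod_singleton, ← vecMul_vecMul, ih, smul_vecMul, hU, vecMul_add, vecMul_one,
        vecMul_smul, hA1, prod_range_succ]
      module
  rw [← vecMul_vecMul, hA1, smul_vecMul, hprod, smul_smul, eigenFactor]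

theorem tendsto_zero_of_norm_le_mul_rpow {E : Type*} [SeminormedAddCommGroup E] {f : ℕ → E}
    {c p : ℝ} (hp : p < 0) (hf : ∀ᶠ t in atTop, ‖f t‖ ≤ c * (t : ℝ) ^ p) :
    Tendsto f atTop (nhds 0) := by
  have hpow : Tendsto (fun t : ℕ => (t : ℝ) ^ p) atTop (nhds 0) := by
    simpa [Function.comp_def] using
      (tendsto_rpow_neg_atTop (neg_pos.mpr hp)).comp tendsto_natCast_atTop_atTop
  rw [tendsto_zero_iff_norm_tendsto_zero]
  exact squeeze_zero' (Eventually.of_forall fun t => norm_nonneg _) hf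
    (by simpa using hpow.const_mul c)

theorem stmt_12_general (N : ℕ) (A : Matrix (Fin N) (Fin N) ℝ)
    (hnonneg : ∀ i j, 0 ≤ A i j) (hsym : A.IsSymm)
    (hrow : ∀ i, ∑ j, A i j = 1)
    (lam₁ : ℝ) (hlam₁ : lam₁ < 1)
    (heig : ∀ (μ : ℝ) (v : Fin N → ℝ), v ≠ 0 → A.mulVec v = μ • v → μ = 1 ∨ μ ≤ lam₁)
    (N0 d : ℝ) (hN0 : 0 < N0) (hd : 0 < d)
    (Z0 : Fin N → ℝ)
    (U : ℕ → Matrix (Fin N) (Fin N) ℝ)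
    (hU : ∀ j, U j = 1 + (d / (N0 + d * j)) • (A - 1)) :
    (∃ c : ℝ, ∀ᶠ t : ℕ in atTop,
        ‖Matrix.vecMul Z0 ((A - 1) * ((List.range t).map (fun j => U (j + 1))).prod)‖ ≤
          c * (t : ℝ) ^ (lam₁ - 1)) ∧
    Tendsto
      (fun t : ℕ => Matrix.vecMul Z0 ((A - 1) * ((List.range t).map (fun j => U (j + 1))).prod))
      atTop (nhds 0) := by
  have hA : A.IsHermitian := by rwa [IsHermitian, conjTranspose_eq_transpose_of_trivial]
  have hbound : ∀ᶠ t : ℕ in atTop,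
      ‖Z0 ᵥ* ((A - 1) * ((List.range t).map (fun j => U (j + 1))).prod)‖ ≤
        (∑ i, |hA.eigenvectorBasis.repr (WithLp.toLp 2 Z0) i|) *
          (2 * ((N0 + 2 * d) / d) ^ (1 - lam₁)) * (t : ℝ) ^ (lam₁ - 1) := by
    filter_upwards [eventually_ge_atTop 1] with t ht
    rw [mul_assoc]
    refine hA.norm_vecMul_le_of_vecMul_eigenvectorBasis Z0
      (fun i => vecMul_sub_one_mul_prod hU (hA.vecMul_eigenvectorBasis i) t) fun i => ?_
    have hv := hA.eigenvectorBasis_ne_zero i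
    have hAv := hA.mulVec_eigenvectorBasis i
    exact abs_eigenFactor_le hN0 hd (neg_one_le_of_mulVec_eq_smul hnonneg hrow hv hAv)
      (heig _ _ hv hAv) hlam₁ ht
  exact ⟨⟨_, hbound⟩, tendsto_zero_of_norm_le_mul_rpow (by linarith) hbound⟩

theorem stmt_12 (N : ℕ) (A : Matrix (Fin N) (Fin N) ℝ)
    (hnonneg : ∀ i j, 0 ≤ A i j) (hsym : A.IsSymm)
    (hrow : ∀ i, ∑ j, A i j = 1)
    (hsimple : ∀ v : Fin N → ℝ, A.mulVec v = v → ∃ c : ℝ, v = fun _ => c)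
    (lam₁ : ℝ) (hlam₁ : lam₁ < 1)
    (heig : ∀ (μ : ℝ) (v : Fin N → ℝ), v ≠ 0 → A.mulVec v = μ • v → μ = 1 ∨ μ ≤ lam₁)
    (N0 d : ℝ) (hN0 : 0 < N0) (hd : 0 < d)
    (Z0 : Fin N → ℝ) (hZ0 : ∀ i, Z0 i ∈ Set.Icc (0:ℝ) 1)
    (U : ℕ → Matrix (Fin N) (Fin N) ℝ)
    (hU : ∀ j, U j = 1 + (d / (N0 + d * j)) • (A - 1)) :
    (∃ c : ℝ, ∀ᶠ t : ℕ in atTop,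
        ‖Matrix.vecMul Z0 ((A - 1) * ((List.range t).map (fun j => U (j + 1))).prod)‖ ≤
          c * (t : ℝ) ^ (lam₁ - 1)) ∧
    Tendsto
      (fun t : ℕ => Matrix.vecMul Z0 ((A - 1) * ((List.range t).map (fun j => U (j + 1))).prod))
      atTop (nhds 0) :=
  stmt_12_general N A hnonneg hsym hrow lam₁ hlam₁ heig N0 d hN0 hd Z0 U hU
end

section
/- For the two-vertex graph with self-loops and mutual edges (adjacency matrix with all entries 1 on a 2-vertex complete graph with loops), with replacement matrices [[a_i, m − a_i],[m − b_i, b_i]] at vertex i ∈ {1,2}, the equilibrium proportions at both vertices equal (1 − (b₁+b₂)/(2m)) / (2 − (a₁+a₂)/(2m) − (b₁+b₂)/(2m)), assuming a₁+a₂+b₁+b₂ < 4m. -/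
open Matrix

section RankOnePerturbation

variable {ι K : Type*} [Fintype ι] [Field K]

theorem vecMul_smul_of_const_one (c : K) (v : ι → K) :
    v ᵥ* (c • of fun _ _ => 1 : Matrix ι ι K) = fun _ => c * ∑ i, v i := by
  ext j
  simp [vecMul, dotProduct, Finset.mul_sum, mul_comm]

theorem vecMul_one_sub_diagonal_mul_smul_of_const_one [DecidableEq ι] (c : K) (d z : ι → K) :
    z ᵥ* (1 - diagonal d * (c • of fun _ _ => 1 : Matrix ι ι K)) =
      z - fun _ => c * ∑ i, z i * d i := by
  simp only [vecMul_sub, vecMul_one, ← vecMul_vecMul, vecMul_smul_of_const_one, vecMul_diagonal]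

/-- The equation `z = c (∑ zᵢ dᵢ + ∑ wᵢ) 𝟙` forces `z` to be constant, which reduces it to a
scalar linear equation. -/
theorem sub_const_sum_mul_eq_const_iff (c : K) (d w z : ι → K) (hdet : 1 - c * ∑ i, d i ≠ 0) :
    (z - fun _ => c * ∑ i, z i * d i) = (fun _ => c * ∑ i, w i) ↔
      z = fun _ => c * (∑ i, w i) / (1 - c * ∑ i, d i) := by
  constructor
  · intro h
    set s := c * ((∑ i, z i * d i) + ∑ i, w i)
    have hz : z = fun _ => s := by
      rw [sub_eq_iff_eq_add] at h
      rw [h]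
      ext
      simp only [Pi.add_apply, s]
      ring
    have hs : s * (1 - c * ∑ i, d i) = c * ∑ i, w i := by
      have : s = c * (s * ∑ i, d i + ∑ i, w i) := by
        conv_lhs => simp only [s]
        rw [hz, Finset.mul_sum]
      linear_combination this
    rw [hz]
    ext
    rw [eq_div_iff hdet, hs]
  · rintro rfl
    ext j
    simp only [Pi.sub_apply, ← Finset.mul_sum]
    field_simp

end RankOnePerturbation

theorem stmt_17_general (m a₁ a₂ b₁ b₂ : ℝ) (hm : 0 < m)
    (hsum : a₁ + a₂ + b₁ + b₂ < 4 * m)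
    (Atil : Matrix (Fin 2) (Fin 2) ℝ) (hA : Atil = (1 / 2 : ℝ) • Matrix.of fun _ _ => 1)
    (C : Matrix (Fin 2) (Fin 2) ℝ) (hC : C = Matrix.diagonal ![a₁ + b₁ - m, a₂ + b₂ - m])
    (bv : Fin 2 → ℝ) (hbv : bv = ![b₁, b₂]) :
    ∀ z : Fin 2 → ℝ,
      Matrix.vecMul z ((1 : Matrix (Fin 2) (Fin 2) ℝ) - m⁻¹ • (C * Atil)) =
          Matrix.vecMul (fun i => 1 - bv i / m) Atil ↔
        z = fun _ =>
          (1 - (b₁ + b₂) / (2 * m)) /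
            (2 - (a₁ + a₂) / (2 * m) - (b₁ + b₂) / (2 * m)) := by
  subst hA hC hbv
  intro z
  rw [← Matrix.smul_mul, ← diagonal_smul, vecMul_one_sub_diagonal_mul_smul_of_const_one,
    vecMul_smul_of_const_one, sub_const_sum_mul_eq_const_iff]
  all_goals simp only [Fin.sum_univ_two, Pi.smul_apply, cons_val_zero, cons_val_one, smul_eq_mul]
  · congr! 2
    field_simp
    ring
  · apply ne_of_gt
    field_simp
    linarith

theorem stmt_17 (m a₁ a₂ b₁ b₂ : ℝ) (hm : 0 < m)
    (ha₁ : a₁ ∈ Set.Icc 0 m) (ha₂ : a₂ ∈ Set.Icc 0 m)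
    (hb₁ : b₁ ∈ Set.Icc 0 m) (hb₂ : b₂ ∈ Set.Icc 0 m)
    (hsum : a₁ + a₂ + b₁ + b₂ < 4 * m)
    (Atil : Matrix (Fin 2) (Fin 2) ℝ) (hA : Atil = (1 / 2 : ℝ) • Matrix.of fun _ _ => 1)
    (C : Matrix (Fin 2) (Fin 2) ℝ) (hC : C = Matrix.diagonal ![a₁ + b₁ - m, a₂ + b₂ - m])
    (bv : Fin 2 → ℝ) (hbv : bv = ![b₁, b₂]) :
    ∀ z : Fin 2 → ℝ,
      Matrix.vecMul z ((1 : Matrix (Fin 2) (Fin 2) ℝ) - m⁻¹ • (C * Atil)) =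
          Matrix.vecMul (fun i => 1 - bv i / m) Atil ↔
        z = fun _ =>
          (1 - (b₁ + b₂) / (2 * m)) /
            (2 - (a₁ + a₂) / (2 * m) - (b₁ + b₂) / (2 * m)) :=
  stmt_17_general m a₁ a₂ b₁ b₂ hm hsum Atil hA C hC bv hbv
end
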